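/- arXiv:2010.10447 — 6 statements merged into one kernel-verified Lean document; each statement's English description precedes it below -/
import Mathlib

section
/- Suppose chains C and C′ are both finalized (with epochs e and e′ respectively) and C and C′ conflict. Then at least one third of the validators violate a slashing condition, i.e., 3 · |{ i : Fin n | i violates slashing condition 1 or i violates slashing condition 2 }| ≥ n. -/
open scoped Classical

/-- A chain is notarized if at least two thirds of the validators vote for it. -/
def Notarized (n : ℕ) (vote : Fin n → List ℕ → Prop) (C : List ℕ) : Prop :=
  3 * (Finset.univ.filter (fun i => vote i C)).card ≥ 2 * n

/-- Slashing condition 1: voting for two distinct chains with the same epoch (last entry). -/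
def ViolatesSlash1 (n : ℕ) (vote : Fin n → List ℕ → Prop) (i : Fin n) : Prop :=
  ∃ C₁ C₂ : List ℕ, C₁ ≠ [] ∧ C₂ ≠ [] ∧ C₁ ≠ C₂ ∧
    C₁.getLastD 0 = C₂.getLastD 0 ∧ vote i C₁ ∧ vote i C₂

/-- Slashing condition 2: voting for a strictly longer chain of an earlier epoch
and a strictly shorter chain of a later epoch. -/
def ViolatesSlash2 (n : ℕ) (vote : Fin n → List ℕ → Prop) (i : Fin n) : Prop :=
  ∃ C₁ C₂ : List ℕ, C₁ ≠ [] ∧ C₂ ≠ [] ∧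
    C₁.getLastD 0 < C₂.getLastD 0 ∧ C₂.length < C₁.length ∧ vote i C₁ ∧ vote i C₂

/-- Two chains conflict if neither is a prefix of the other. -/
def Conflicting (C C' : List ℕ) : Prop := ¬ C <+: C' ∧ ¬ C' <+: C

/-- A chain `C` is finalized with epoch `e` if it has length ≥ 2, ends in epochs
`e - 1, e`, and every nonempty prefix of `C ++ [e + 1]` is notarized. -/
def Finalized (n : ℕ) (vote : Fin n → List ℕ → Prop) (C : List ℕ) (e : ℕ) : Prop :=
  2 ≤ C.length ∧ C.getLastD 0 = e ∧ C.dropLast.getLastD 0 = e - 1 ∧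
    ∀ P : List ℕ, P <+: C ++ [e + 1] → P ≠ [] → Notarized n vote P

lemma quorum_slash {n : ℕ} {vote : Fin n → List ℕ → Prop} {P Q : List ℕ}
    (hP : Notarized n vote P) (hQ : Notarized n vote Q)
    (h : ∀ i, vote i P → vote i Q → ViolatesSlash1 n vote i ∨ ViolatesSlash2 n vote i) :
    3 * (Finset.univ.filter
      (fun i => ViolatesSlash1 n vote i ∨ ViolatesSlash2 n vote i)).card ≥ n := by
  classical
  unfold Notarized at hP hQ
  set A := Finset.univ.filter (fun i => vote i P) with hA
  set B := Finset.univ.filter (fun i => vote i Q) with hB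
  set S := Finset.univ.filter
      (fun i => ViolatesSlash1 n vote i ∨ ViolatesSlash2 n vote i) with hS
  have hsub : A ∩ B ⊆ S := by
    intro i hi
    rw [Finset.mem_inter, hA, hB, Finset.mem_filter, Finset.mem_filter] at hi
    rw [hS, Finset.mem_filter]
    exact ⟨Finset.mem_univ i, h i hi.1.2 hi.2.2⟩
  have h1 : (A ∩ B).card ≤ S.card := Finset.card_le_card hsub
  have h2 : (A ∪ B).card + (A ∩ B).card = A.card + B.card :=
    Finset.card_union_add_card_inter A B
  have h3 : (A ∪ B).card ≤ n := by
    have := Finset.card_le_univ (A ∪ B)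
    simpa using this
  omega

lemma slash1_pair {n : ℕ} {vote : Fin n → List ℕ → Prop} {P Q : List ℕ}
    (hP : Notarized n vote P) (hQ : Notarized n vote Q)
    (hPne : P ≠ []) (hQne : Q ≠ []) (hne : P ≠ Q)
    (he : P.getLastD 0 = Q.getLastD 0) :
    3 * (Finset.univ.filter
      (fun i => ViolatesSlash1 n vote i ∨ ViolatesSlash2 n vote i)).card ≥ n :=
  quorum_slash hP hQ (fun i h1 h2 => Or.inl ⟨P, Q, hPne, hQne, hne, he, h1, h2⟩)

lemma slash2_pair {n : ℕ} {vote : Fin n → List ℕ → Prop} {P Q : List ℕ}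
    (hP : Notarized n vote P) (hQ : Notarized n vote Q)
    (hPne : P ≠ []) (hQne : Q ≠ [])
    (he : P.getLastD 0 < Q.getLastD 0) (hl : Q.length < P.length) :
    3 * (Finset.univ.filter
      (fun i => ViolatesSlash1 n vote i ∨ ViolatesSlash2 n vote i)).card ≥ n :=
  quorum_slash hP hQ (fun i h1 h2 => Or.inr ⟨P, Q, hPne, hQne, he, hl, h1, h2⟩)

lemma main_lt (n : ℕ) (vote : Fin n → List ℕ → Prop) (C C' : List ℕ) (e e' : ℕ)
    (hC : Finalized n vote C e) (hC' : Finalized n vote C' e')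
    (h1 : ¬ C <+: C') (h2 : ¬ C' <+: C) (hee : e < e') :
    3 * (Finset.univ.filter
      (fun i => ViolatesSlash1 n vote i ∨ ViolatesSlash2 n vote i)).card ≥ n := by
  obtain ⟨hlen, hlast, hpen, hnot⟩ := hC
  obtain ⟨hlen', hlast', hpen', hnot'⟩ := hC'
  classical
  set L := C.length with hL
  set M := C'.length with hM
  set D' : List ℕ := C' ++ [e' + 1] with hD'
  have hCne : C ≠ [] := List.ne_nil_of_length_pos (by omega)
  have hNC : Notarized n vote C := hnot C (List.prefix_append C [e+1]) hCne
  have hND : Notarized n vote (C ++ [e+1]) := hnot _ (List.prefix_refl _) (by simp)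
  have hPdlen : C.dropLast.length = L - 1 := by simp [List.length_dropLast, hL]
  have hPdne : C.dropLast ≠ [] := List.ne_nil_of_length_pos (by omega)
  have hNPd : Notarized n vote C.dropLast :=
    hnot _ ((List.dropLast_prefix C).trans (List.prefix_append C [e+1])) hPdne
  have hDlast : (C ++ [e+1]).getLastD 0 = e + 1 := by simp
  have hD'len : D'.length = M + 1 := by simp [hD', hM]
  have hQlen : ∀ k, k ≤ M + 1 → (D'.take k).length = k := by
    intro k hk; rw [List.length_take, hD'len]; omega
  have hQne : ∀ k, 1 ≤ k → k ≤ M + 1 → D'.take k ≠ [] := by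
    intro k hk1 hk2
    exact List.ne_nil_of_length_pos (by rw [hQlen k hk2]; omega)
  have hNQ : ∀ k, 1 ≤ k → k ≤ M + 1 → Notarized n vote (D'.take k) :=
    fun k hk1 hk2 => hnot' _ (List.take_prefix k D') (hQne k hk1 hk2)
  set ε : ℕ → ℕ := fun k => (D'.take k).getLastD 0 with hε
  have hεtop : ε (M + 1) = e' + 1 := by
    show (D'.take (M+1)).getLastD 0 = e' + 1
    rw [List.take_of_length_le (by omega)]
    simp [hD']
  have hCpre : ¬ C <+: D' := by
    intro h
    have hle : L ≤ M + 1 := by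
      have := h.length_le; rw [hD'len] at this; exact this
    have heq : C = D'.take L := List.prefix_iff_eq_take.mp h
    rcases Nat.lt_or_ge L (M + 1) with hlt | hge
    · apply h1
      rw [heq, hD', List.take_append_of_le_length (by omega)]
      exact List.take_prefix L C'
    · apply h2
      have : C = D' := by rw [heq, List.take_of_length_le (by omega)]
      rw [this, hD']
      exact List.prefix_append C' [e' + 1]
  rcases Nat.lt_or_ge (ε 1) (e + 2) with hε1 | hε1
  · -- ε 1 ≤ e + 1 : find greatest k with ε k ≤ e + 1
    have hε1' : ε 1 ≤ e + 1 := by omega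
    set k := Nat.findGreatest (fun j => ε j ≤ e + 1) (M + 1) with hk
    have hkspec : ε k ≤ e + 1 := Nat.findGreatest_spec (P := fun j => ε j ≤ e + 1) (by omega) hε1'
    have hkge1 : 1 ≤ k := Nat.le_findGreatest (by omega) hε1'
    have hkle : k ≤ M + 1 := Nat.findGreatest_le (M + 1)
    have hklt : k < M + 1 := by
      rcases Nat.lt_or_ge k (M + 1) with h | h
      · exact h
      · exfalso
        have : k = M + 1 := by omega
        rw [this, hεtop] at hkspec; omega
    have hksucc : ¬ ε (k + 1) ≤ e + 1 :=
      Nat.findGreatest_is_greatest (P := fun j => ε j ≤ e + 1) (n := M + 1)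
        (k := k + 1) (by omega) (by omega)
    rcases Nat.lt_or_ge (ε k) e with hklow | hkhigh
    · -- ε k ≤ e - 1
      have he1 : 1 ≤ e := by omega
      rcases Nat.lt_or_ge k L with hkL | hkL
      · -- k + 1 ≤ L : slash2 with C ++ [e+1] and D'.take (k+1)
        apply slash2_pair hND (hNQ (k+1) (by omega) (by omega)) (by simp)
          (hQne (k+1) (by omega) (by omega))
        · show (C ++ [e+1]).getLastD 0 < ε (k + 1)
          rw [hDlast]; omega
        · show (D'.take (k+1)).length < (C ++ [e+1]).length
          rw [hQlen (k+1) (by omega)]; simp; omega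
      · -- k ≥ L
        rcases Nat.lt_or_ge (ε k) (e - 1) with hlt | hge
        · apply slash2_pair (hNQ k hkge1 hkle) hNPd (hQne k hkge1 hkle) hPdne
          · show ε k < C.dropLast.getLastD 0
            rw [hpen]; omega
          · rw [hQlen k hkle, hPdlen]; omega
        · have hεk : ε k = e - 1 := by omega
          apply slash1_pair (hNQ k hkge1 hkle) hNPd (hQne k hkge1 hkle) hPdne
          · intro h
            have := congrArg List.length h
            rw [hQlen k hkle, hPdlen] at this; omega
          · show ε k = C.dropLast.getLastD 0
            rw [hpen, hεk]
    · -- ε k = e or ε k = e + 1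
      rcases Nat.lt_or_ge (ε k) (e + 1) with hke | hke1
      · -- ε k = e : compare with C
        have hεk : ε k = e := by omega
        by_cases heq : D'.take k = C
        · exact absurd (heq ▸ List.take_prefix k D') hCpre
        · apply slash1_pair (hNQ k hkge1 hkle) hNC (hQne k hkge1 hkle) hCne heq
          show ε k = C.getLastD 0
          rw [hlast, hεk]
      · -- ε k = e + 1 : compare with C ++ [e+1]
        have hεk : ε k = e + 1 := by omega
        by_cases heq : D'.take k = C ++ [e+1]
        · exact absurd ((List.prefix_append C [e+1]).trans
            (heq ▸ List.take_prefix k D')) hCpre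
        · apply slash1_pair (hNQ k hkge1 hkle) hND (hQne k hkge1 hkle) (by simp) heq
          show ε k = (C ++ [e+1]).getLastD 0
          rw [hDlast, hεk]
  · -- ε 1 ≥ e + 2 : slash2 with C and D'.take 1
    apply slash2_pair hNC (hNQ 1 le_rfl (by omega)) hCne (hQne 1 le_rfl (by omega))
    · show C.getLastD 0 < ε 1
      rw [hlast]; omega
    · rw [hQlen 1 (by omega)]; omega

/-- Accountable safety of Streamlet: a safety violation (two conflicting finalized
chains) implies that at least one third of the validators violate a slashing condition. -/
theorem streamlet_accountable_safety (n : ℕ) (vote : Fin n → List ℕ → Prop)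
    (C C' : List ℕ) (e e' : ℕ)
    (hC : Finalized n vote C e) (hC' : Finalized n vote C' e')
    (hconf : Conflicting C C') :
    3 * (Finset.univ.filter
      (fun i => ViolatesSlash1 n vote i ∨ ViolatesSlash2 n vote i)).card ≥ n := by
  rcases lt_trichotomy e e' with h | h | h
  · exact main_lt n vote C C' e e' hC hC' hconf.1 hconf.2 h
  · -- e = e' : both chains have the same last epoch
    obtain ⟨hlen, hlast, -, hnot⟩ := hC
    obtain ⟨hlen', hlast', -, hnot'⟩ := hC'
    have hCne : C ≠ [] := List.ne_nil_of_length_pos (by omega)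
    have hCne' : C' ≠ [] := List.ne_nil_of_length_pos (by omega)
    apply slash1_pair (hnot C (List.prefix_append C [e+1]) hCne)
      (hnot' C' (List.prefix_append C' [e'+1]) hCne') hCne hCne'
    · intro heq; exact hconf.1 (heq ▸ List.prefix_refl C)
    · rw [hlast, hlast', h]
  · exact main_lt n vote C' C e' e hC' hC hconf.2 hconf.1 h
end

section
/- Suppose C₁ and C₂ are distinct nonempty notarized chains with the same last entry (i.e., two different blocks of the same epoch are both notarized). Then 3 · |{ i : Fin n | i violates slashing condition 1 }| ≥ n, i.e., at least one third of the validators violate slashing condition 1. -/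
open scoped Classical

/-- If two distinct nonempty chains of the same epoch are both notarized, then at
least one third of the validators violate slashing condition 1. -/
theorem streamlet_slash1_of_same_epoch_notarized (n : ℕ)
    (vote : Fin n → List ℕ → Prop) (C₁ C₂ : List ℕ)
    (h₁ : C₁ ≠ []) (h₂ : C₂ ≠ []) (hne : C₁ ≠ C₂)
    (hlast : C₁.getLastD 0 = C₂.getLastD 0)
    (hN₁ : Notarized n vote C₁) (hN₂ : Notarized n vote C₂) :
    3 * (Finset.univ.filter (fun i => ViolatesSlash1 n vote i)).card ≥ n := by
  set A := Finset.univ.filter (fun i => vote i C₁) with hA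
  set B := Finset.univ.filter (fun i => vote i C₂) with hB
  have hsub : A ∩ B ⊆ Finset.univ.filter (fun i => ViolatesSlash1 n vote i) := by
    intro i hi
    simp only [hA, hB, Finset.mem_inter, Finset.mem_filter] at hi
    simp only [Finset.mem_filter, Finset.mem_univ, true_and]
    exact ⟨C₁, C₂, h₁, h₂, hne, hlast, hi.1.2, hi.2.2⟩
  have hcard : A.card + B.card ≤ n + (A ∩ B).card := by
    have := Finset.card_union_add_card_inter A B
    have hle : (A ∪ B).card ≤ n := by
      simpa using Finset.card_le_card (Finset.subset_univ (A ∪ B))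
    omega
  have hAB := Finset.card_le_card hsub
  have hN₁' : 3 * A.card ≥ 2 * n := by unfold Notarized at hN₁; convert hN₁ using 3
  have hN₂' : 3 * B.card ≥ 2 * n := by unfold Notarized at hN₂; convert hN₂ using 3
  omega
end

section
/- Suppose C₁ and C₂ are nonempty notarized chains such that the last entry of C₁ is strictly smaller than the last entry of C₂ but C₁ is strictly longer than C₂ (i.e., a block of an earlier epoch but greater depth and a block of a later epoch but smaller depth are both notarized). Then 3 · |{ i : Fin n | i violates slashing condition 2 }| ≥ n, i.e., at least one third of the validators violate slashing condition 2. -/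
open scoped Classical

/-- If a strictly longer chain of an earlier epoch and a strictly shorter chain of
a later epoch are both notarized, then at least one third of the validators
violate slashing condition 2. -/
theorem streamlet_slash2_of_notarized (n : ℕ)
    (vote : Fin n → List ℕ → Prop) (C₁ C₂ : List ℕ)
    (h₁ : C₁ ≠ []) (h₂ : C₂ ≠ [])
    (hlast : C₁.getLastD 0 < C₂.getLastD 0) (hlen : C₂.length < C₁.length)
    (hN₁ : Notarized n vote C₁) (hN₂ : Notarized n vote C₂) :
    3 * (Finset.univ.filter (fun i => ViolatesSlash2 n vote i)).card ≥ n := by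
  unfold Notarized at hN₁ hN₂
  set A := Finset.univ.filter (fun i => vote i C₁)
  set B := Finset.univ.filter (fun i => vote i C₂)
  have hsub : A ∩ B ⊆ Finset.univ.filter (fun i => ViolatesSlash2 n vote i) := by
    intro i hi
    simp only [A, B, Finset.mem_inter, Finset.mem_filter] at hi ⊢
    exact ⟨Finset.mem_univ i, C₁, C₂, h₁, h₂, hlast, hlen, hi.1.2, hi.2.2⟩
  have hcard : A.card + B.card ≤ (A ∩ B).card + n := by
    have := Finset.card_union_add_card_inter A B
    have hu : (A ∪ B).card ≤ n := by
      simpa using Finset.card_le_card (Finset.subset_univ (A ∪ B))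
    omega
  have := Finset.card_le_card hsub
  omega
end

section
/- For any lists of lists S and S′ over a type α with decidable equality, if S is a prefix of S′ (as a list of lists), then sanitize (S.join) is a prefix of sanitize (S′.join). (In the snap-and-chat ledger extraction, this means that as the safe BFT output ledger of snapshots grows, the finalized ledger obtained by flattening and sanitizing it only grows, never reorganizes.) -/
/-- `sanitize l` removes all but the first occurrence of each element of `l`,
preserving the original order, e.g. `sanitize [a,b,a,c,b] = [a,b,c]`. -/
def sanitize {α : Type*} [DecidableEq α] (l : List α) : List α :=
  l.foldl (fun acc a => if a ∈ acc then acc else acc ++ [a]) []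

lemma foldl_prefix {α : Type*} [DecidableEq α] (l : List α) (acc : List α) :
    acc <+: l.foldl (fun acc a => if a ∈ acc then acc else acc ++ [a]) acc := by
  induction l generalizing acc with
  | nil => exact List.prefix_refl _
  | cons a l ih =>
    refine List.IsPrefix.trans ?_ (ih (if a ∈ acc then acc else acc ++ [a]))
    split
    · exact List.prefix_refl _
    · exact List.prefix_append _ _

/-- As the BFT output ledger of snapshots grows, the finalized ledger obtained by
flattening and sanitizing only grows. -/
theorem sanitize_join_prefix_mono {α : Type*} [DecidableEq α] (S S' : List (List α))
    (h : S <+: S') : sanitize S.flatten <+: sanitize S'.flatten := by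
  obtain ⟨t, rfl⟩ := h
  show sanitize S.flatten <+: sanitize (S ++ t).flatten
  rw [List.flatten_append]
  unfold sanitize
  rw [List.foldl_append]
  exact foldl_prefix _ _
end

section
/- Let L be a list over a type α with decidable equality having no duplicate elements, and let S be a list of lists each of which is a prefix of L. Then sanitize (S.join) is a prefix of L. (In snap-and-chat protocols under dynamic availability, whatever the BFT sub-protocol finalizes is consistent with the longest-chain output ledger: the finalized ledger is a prefix of the longest-chain ledger.) -/
private def sstep {α : Type*} [DecidableEq α] (acc : List α) (a : α) : List α :=
  if a ∈ acc then acc else acc ++ [a]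

private lemma foldl_sstep_of_subset {α : Type*} [DecidableEq α] :
    ∀ (s acc : List α), (∀ a ∈ s, a ∈ acc) → s.foldl sstep acc = acc
  | [], _, _ => rfl
  | a :: s, acc, h => by
    have ha : a ∈ acc := h a (.head _)
    simp only [List.foldl, sstep, if_pos ha]
    exact foldl_sstep_of_subset s acc fun b hb => h b (.tail _ hb)

private lemma foldl_sstep_nodup {α : Type*} [DecidableEq α] :
    ∀ (r acc : List α), (acc ++ r).Nodup → r.foldl sstep acc = acc ++ r
  | [], acc, _ => by simp
  | a :: r, acc, h => by
    have ha : a ∉ acc := fun hm =>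
      (List.disjoint_of_nodup_append h) hm (.head _)
    simp only [List.foldl, sstep, if_neg ha]
    have h' : ((acc ++ [a]) ++ r).Nodup := by
      rw [List.append_assoc]; simpa using h
    rw [foldl_sstep_nodup r (acc ++ [a]) h', List.append_assoc]
    rfl

private lemma foldl_sstep_prefix {α : Type*} [DecidableEq α] {L : List α}
    (hL : L.Nodup) {acc s : List α} (hacc : acc <+: L) (hs : s <+: L) :
    s.foldl sstep acc <+: L := by
  rcases List.prefix_or_prefix_of_prefix hs hacc with h | h
  · rw [foldl_sstep_of_subset s acc fun a ha => h.subset ha]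
    exact hacc
  · obtain ⟨r, rfl⟩ := h
    rw [List.foldl_append, foldl_sstep_of_subset acc acc fun a ha => ha,
      foldl_sstep_nodup r acc (hs.sublist.nodup hL)]
    exact hs

/-- If `L` has no duplicates and every element of `S` is a prefix of `L`, then the
finalized ledger `sanitize S.join` is a prefix of `L`. -/
theorem sanitize_join_prefix {α : Type*} [DecidableEq α] (L : List α)
    (hL : L.Nodup) (S : List (List α)) (hpre : ∀ s ∈ S, s <+: L) :
    sanitize S.flatten <+: L := by
  suffices h : ∀ (S : List (List α)) (acc : List α), acc <+: L →
      (∀ s ∈ S, s <+: L) → (S.flatten).foldl sstep acc <+: L by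
    exact h S [] (List.nil_prefix) hpre
  intro S
  induction S with
  | nil => intro acc hacc _; simpa using hacc
  | cons s rest ih =>
    intro acc hacc hp
    rw [List.flatten_cons, List.foldl_append]
    exact ih _ (foldl_sstep_prefix hL hacc (hp s (.head _)))
      fun t ht => hp t (.tail _ ht)
end

section
/- Let L be a list over a type α with decidable equality having no duplicate elements, and let S be a list of lists each of which is a prefix of L. Then sanitize (sanitize (S.join) ++ L) = L. (In snap-and-chat protocols under dynamic availability, the available ledger — obtained by prepending the finalized ledger sanitize(S.join) to the longest-chain ledger L and sanitizing — is exactly the longest-chain ledger L, and hence inherits its safety and liveness.) -/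
private lemma prefix_eq_of_length {α : Type*} {p q L : List α}
    (hp : p <+: L) (hq : q <+: L) (h : p.length = q.length) : p = q :=
  (List.prefix_of_prefix_length_le hp hq h.le).eq_of_length h

private lemma core {α : Type*} [DecidableEq α] (L : List α) (hL : L.Nodup)
    (s : List α) (hs : s <+: L) (acc : List α) (hacc : acc <+: L) :
    (List.foldl (fun acc a => if a ∈ acc then acc else acc ++ [a]) acc s) <+: L ∧
    (List.foldl (fun acc a => if a ∈ acc then acc else acc ++ [a]) acc s).length
      = max acc.length s.length := by
  induction s using List.reverseRecOn with
  | nil => simpa using hacc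
  | append_singleton t a ih =>
    have ht : t <+: L := (t.prefix_append [a]).trans hs
    obtain ⟨hcurL, hcurlen⟩ := ih ht
    rw [List.foldl_append]
    set cur := List.foldl (fun acc a => if a ∈ acc then acc else acc ++ [a]) acc t with hcur
    simp only [List.foldl_cons, List.foldl_nil]
    by_cases hmem : a ∈ cur
    · have hlen : t.length < cur.length := by
        by_contra h
        push_neg at h
        have hcurt : cur <+: t := List.prefix_of_prefix_length_le hcurL ht h
        have hat : a ∈ t := hcurt.subset hmem
        have hnd : (t ++ [a]).Nodup := hL.sublist hs.sublist
        rw [List.nodup_append] at hnd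
        exact hnd.2.2 a hat a (by simp) rfl
      rw [if_pos hmem]
      refine ⟨hcurL, ?_⟩
      rw [hcurlen] at hlen ⊢
      simp only [List.length_append, List.length_singleton]
      omega
    · have hlen : cur.length ≤ t.length := by
        by_contra h
        push_neg at h
        have : t ++ [a] <+: cur :=
          List.prefix_of_prefix_length_le hs hcurL (by simp only [List.length_append, List.length_singleton]; omega)
        exact hmem (this.subset (by simp))
      have hcure : cur = t := prefix_eq_of_length hcurL ht (by omega)
      rw [if_neg hmem, hcure]
      refine ⟨hs, ?_⟩
      rw [hcurlen] at hlen
      simp only [List.length_append, List.length_singleton]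
      omega

/-- If `L` has no duplicates and every element of `S` is a prefix of `L`, then the
available ledger, obtained by prepending the finalized ledger `sanitize S.join` to
`L` and sanitizing, is exactly `L`. -/
theorem sanitize_fin_prepend_eq {α : Type*} [DecidableEq α] (L : List α)
    (hL : L.Nodup) (S : List (List α)) (hpre : ∀ s ∈ S, s <+: L) :
    sanitize (sanitize S.flatten ++ L) = L := by
  have hjoin : sanitize S.flatten <+: L := by
    unfold sanitize
    rw [List.foldl_flatten]
    have key : ∀ (S' : List (List α)), (∀ s ∈ S', s <+: L) → ∀ acc, acc <+: L →
        List.foldl (List.foldl (fun acc a => if a ∈ acc then acc else acc ++ [a])) acc S' <+: L := by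
      intro S' hS'
      induction S' with
      | nil => intro acc h; simpa
      | cons s t ih =>
        intro acc h
        simp only [List.foldl_cons]
        exact ih (fun x hx => hS' x (List.mem_cons_of_mem _ hx))
          _ (core L hL s (hS' s List.mem_cons_self) acc h).1
    exact key S hpre [] List.nil_prefix
  set M := sanitize S.flatten with hM
  unfold sanitize
  rw [List.foldl_append]
  have hMfold : List.foldl (fun acc a => if a ∈ acc then acc else acc ++ [a]) [] M = M := by
    obtain ⟨h1, h2⟩ := core L hL M hjoin [] List.nil_prefix
    exact prefix_eq_of_length h1 hjoin (by simpa using h2)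
  rw [hMfold]
  obtain ⟨h1, h2⟩ := core L hL L (List.prefix_refl L) M hjoin
  exact prefix_eq_of_length h1 (List.prefix_refl L) (by rw [h2]; have := hjoin.length_le; omega)
end
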